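/- For every k > 0 and every x ∈ ℝ³ with |x| > 1, ∫_{S²} (∇G^k)(x−y) × y dσ(y) = 0, where × denotes the vector cross product in ℝ³. (This is the key step showing that the vector field w(x) = ∫_{S²} (k² I + Hess) G^k(x−y) y dσ(y) is curl-free in the exterior of the unit ball.) -/

import Mathlib

/-!
Away from the origin `∇G^k(z)` is a scalar multiple `c(‖z‖) z` of `z`, and `(x - y) × y = x × y`,
so on the sphere the `m`-th component of the integrand is `c(‖x - y‖) ⟪e_m × x, y⟫`.
The reflection in the hyperplane orthogonal to `v = e_m × x` fixes `x` (as `v ⊥ x`) and preserves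
the surface measure of the sphere, but negates `⟪v, y⟫`; hence the integral equals its negative.
-/

open MeasureTheory

noncomputable section

/-- The fundamental solution `G^k(z) = -e^{ik|z|}/(4π|z|)` of the Helmholtz operator
`Δ + k²` in `ℝ³`. -/
noncomputable def G (k : ℂ) (z : EuclideanSpace ℝ (Fin 3)) : ℂ :=
  -Complex.exp (Complex.I * k * ‖z‖) / (4 * Real.pi * ‖z‖ : ℝ)

/-- The gradient `∇G^k` of the fundamental solution, as a `ℂ³`-valued function. -/
noncomputable def gradG (k : ℂ) (z : EuclideanSpace ℝ (Fin 3)) (i : Fin 3) : ℂ :=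
  fderiv ℝ (G k) z (EuclideanSpace.single i 1)

/-- The vector cross product on `ℂ³`. -/
def cross3 (a b : Fin 3 → ℂ) : Fin 3 → ℂ :=
  ![a 1 * b 2 - a 2 * b 1, a 2 * b 0 - a 0 * b 2, a 0 * b 1 - a 1 * b 0]

/-- The surface measure on the unit sphere `S² ⊂ ℝ³`: the 2-dimensional Hausdorff
measure restricted to the sphere. -/
noncomputable def sphMeasure : Measure (EuclideanSpace ℝ (Fin 3)) :=
  (Measure.hausdorffMeasure 2).restrict (Metric.sphere (0 : EuclideanSpace ℝ (Fin 3)) 1)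

open Matrix WithLp
open scoped RealInnerProductSpace

theorem RingHom.comp_cross {R S : Type*} [CommRing R] [CommRing S] (f : R →+* S)
    (a b : Fin 3 → R) : f ∘ (a ⨯₃ b) = (f ∘ a) ⨯₃ (f ∘ b) := by
  ext i
  fin_cases i <;> simp [cross_apply]

theorem cross_apply_eq_dotProduct {R : Type*} [CommRing R] (a b : Fin 3 → R) (i : Fin 3) :
    (a ⨯₃ b) i = b ⬝ᵥ (Pi.single i 1 ⨯₃ a) := by
  rw [← triple_product_permutation, ← triple_product_permutation, single_one_dotProduct]

theorem MeasureTheory.MeasurePreserving.integral_eq_zero_of_comp_eq_neg {α F : Type*}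
    [MeasurableSpace α] [NormedAddCommGroup F] [NormedSpace ℝ F] {μ : Measure α} {R : α → α}
    (hR : MeasurePreserving R μ μ) (hRe : MeasurableEmbedding R) {f : α → F}
    (hf : ∀ y, f (R y) = -f y) : ∫ y, f y ∂μ = 0 := by
  have : IsAddTorsionFree F := .of_isTorsionFree ℝ F
  simp_rw [← self_eq_neg, ← integral_neg, ← hf, hR.integral_comp hRe]

theorem IsometryEquiv.measurePreserving_hausdorffMeasure_restrict {X : Type*} [EMetricSpace X]
    [MeasurableSpace X] [BorelSpace X] (e : X ≃ᵢ X) (d : ℝ) {s : Set X} (hs : MeasurableSet s)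
    (hes : e ⁻¹' s = s) :
    MeasurePreserving e (μH[d].restrict s) (μH[d].restrict s) := by
  simpa only [hes] using (e.measurePreserving_hausdorffMeasure d).restrict_preimage hs

section Reflection

variable {E F : Type*} [NormedAddCommGroup E] [InnerProductSpace ℝ E] [MeasurableSpace E]
  [BorelSpace E] [NormedAddCommGroup F] [NormedSpace ℝ F]

theorem integral_inner_smul_radial_eq_zero {μ : Measure E}
    (hμ : ∀ R : E ≃ₗᵢ[ℝ] E, MeasurePreserving R μ μ) {x v : E} (hxv : ⟪v, x⟫ = 0)
    (c : ℝ → F) : ∫ y, ⟪v, y⟫ • c ‖x - y‖ ∂μ = 0 := by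
  set R := (ℝ ∙ v)ᗮ.reflection
  have hRx : R x = x := Submodule.reflection_mem_subspace_eq_self
    (Submodule.mem_orthogonal_singleton_iff_inner_right.2 hxv)
  have hRv : ∀ y, ⟪v, R y⟫ = -⟪v, y⟫ := fun y => by
    rw [← R.inner_map_map, Submodule.reflection_reflection,
      Submodule.reflection_orthogonalComplement_singleton_eq_neg, inner_neg_left]
  refine (hμ R).integral_eq_zero_of_comp_eq_neg R.toHomeomorph.measurableEmbedding fun y => ?_
  rw [hRv, ← hRx, ← map_sub, R.norm_map, hRx, neg_smul]

end Reflection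

section Radial

variable {E F : Type*} [NormedAddCommGroup E] [InnerProductSpace ℝ E] [NormedAddCommGroup F]
  [NormedSpace ℝ F]

theorem fderiv_comp_norm_sq_apply {φ : ℝ → F} {z : E} (hφ : DifferentiableAt ℝ φ (‖z‖ ^ 2))
    (w : E) : fderiv ℝ (fun y => φ (‖y‖ ^ 2)) z w = (2 * ⟪z, w⟫) • deriv φ (‖z‖ ^ 2) := by
  have h := hφ.hasDerivAt.hasFDerivAt.comp z (hasStrictFDerivAt_norm_sq z).hasFDerivAt
  rw [Function.comp_def] at h
  simp [h.fderiv, mul_smul, ofNat_smul_eq_nsmul]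

end Radial

-- A function of `‖z‖ ^ 2` rather than of `‖z‖`, since `‖·‖ ^ 2` is differentiable everywhere.
def helmholtzProfile (k : ℂ) (s : ℝ) : ℂ :=
  -Complex.exp (Complex.I * k * Real.sqrt s) / (4 * Real.pi * Real.sqrt s)

theorem G_eq_helmholtzProfile (k : ℂ) : G k = fun z => helmholtzProfile k (‖z‖ ^ 2) := by
  ext z
  simp [G, helmholtzProfile, Real.sqrt_sq (norm_nonneg z)]

theorem differentiableAt_helmholtzProfile (k : ℂ) {s : ℝ} (hs : 0 < s) :
    DifferentiableAt ℝ (helmholtzProfile k) s := by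
  have hsqrt : DifferentiableAt ℝ (fun t : ℝ => (Real.sqrt t : ℂ)) s :=
    (Real.hasDerivAt_sqrt hs.ne').ofReal_comp.differentiableAt
  have hne : (4 * Real.pi * Real.sqrt s : ℂ) ≠ 0 := by
    exact_mod_cast (by positivity : 4 * Real.pi * Real.sqrt s ≠ 0)
  unfold helmholtzProfile
  fun_prop (disch := exact hne)

theorem gradG_eq_smul (k : ℂ) {z : EuclideanSpace ℝ (Fin 3)} (hz : z ≠ 0) :
    gradG k z = (2 * deriv (helmholtzProfile k) (‖z‖ ^ 2)) • fun i => (z i : ℂ) := by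
  ext i
  rw [gradG, G_eq_helmholtzProfile, fderiv_comp_norm_sq_apply
    (differentiableAt_helmholtzProfile k (by positivity)), EuclideanSpace.inner_single_right]
  simp only [Real.ringHom_apply, one_mul, Complex.real_smul, Complex.ofReal_mul,
    Complex.ofReal_ofNat, Pi.smul_apply, smul_eq_mul]
  ring

theorem cross3_eq_cross (a b : Fin 3 → ℂ) : cross3 a b = a ⨯₃ b := rfl

theorem cross3_smul_sub_ofReal (c : ℂ) (a b : Fin 3 → ℝ) :
    cross3 (c • fun i => ((a i - b i : ℝ) : ℂ)) (fun i => (b i : ℂ)) =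
      c • fun i => ((a ⨯₃ b) i : ℂ) := by
  have hsub : (fun i => ((a i - b i : ℝ) : ℂ)) =
      (Complex.ofRealHom ∘ a - Complex.ofRealHom ∘ b : Fin 3 → ℂ) := by
    ext; simp
  have hb : (fun i => (b i : ℂ)) = Complex.ofRealHom ∘ b := rfl
  rw [cross3_eq_cross, hsub, hb, map_smul, map_sub, LinearMap.smul_apply, LinearMap.sub_apply,
    cross_self, sub_zero, ← RingHom.comp_cross]
  rfl

theorem EuclideanSpace.cross_apply_eq_inner (a b : EuclideanSpace ℝ (Fin 3)) (i : Fin 3) :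
    (ofLp a ⨯₃ ofLp b) i = ⟪toLp 2 (Pi.single i 1 ⨯₃ ofLp a), b⟫ := by
  rw [cross_apply_eq_dotProduct, EuclideanSpace.inner_eq_star_dotProduct, star_trivial]

theorem grad_cross_normal_integral_vanishes_general
    (k : ℝ) (x : EuclideanSpace ℝ (Fin 3)) (hx : 1 < ‖x‖) :
    ∀ m : Fin 3,
      ∫ y, cross3 (gradG k (x - y)) (fun j => (y j : ℂ)) m ∂sphMeasure = 0 := by
  intro m
  set v : EuclideanSpace ℝ (Fin 3) := toLp 2 (Pi.single m 1 ⨯₃ ofLp x)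
  set c : ℝ → ℂ := fun r => 2 * deriv (helmholtzProfile k) (r ^ 2)
  have hintegrand : ∀ y ∈ Metric.sphere (0 : EuclideanSpace ℝ (Fin 3)) 1,
      cross3 (gradG k (x - y)) (fun j => (y j : ℂ)) m = ⟪v, y⟫ • c ‖x - y‖ := by
    intro y hy
    have hxy : x - y ≠ 0 := sub_ne_zero.2 <| ne_of_apply_ne norm <| by
      rw [mem_sphere_zero_iff_norm.1 hy]; exact hx.ne'
    rw [gradG_eq_smul k hxy]
    simp only [PiLp.sub_apply]
    rw [cross3_smul_sub_ofReal, Pi.smul_apply, EuclideanSpace.cross_apply_eq_inner, smul_eq_mul,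
      Complex.real_smul, mul_comm]
  rw [sphMeasure, setIntegral_congr_fun Metric.isClosed_sphere.measurableSet hintegrand]
  refine integral_inner_smul_radial_eq_zero (fun R => ?_) ?_ c
  · exact R.toIsometryEquiv.measurePreserving_hausdorffMeasure_restrict 2
      Metric.isClosed_sphere.measurableSet (by ext; simp)
  · rw [EuclideanSpace.inner_eq_star_dotProduct, star_trivial]
    exact dot_cross_self _ _

/-- For every `k > 0` and every `x ∈ ℝ³` with `|x| > 1`,
`∫_{S²} ∇G^k(x−y) × y dσ(y) = 0`, where `×` is the vector cross product. -/
theorem grad_cross_normal_integral_vanishes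
    (k : ℝ) (hk : 0 < k) (x : EuclideanSpace ℝ (Fin 3)) (hx : 1 < ‖x‖) :
    ∀ m : Fin 3,
      ∫ y, cross3 (gradG k (x - y)) (fun j => (y j : ℂ)) m ∂sphMeasure = 0 :=
  grad_cross_normal_integral_vanishes_general k x hx
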